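/- arXiv:2305.10978 — 2 statements merged into one kernel-verified Lean document; each statement's English description precedes it below -/
import Mathlib

section
/- For any finite MDP among N MDPs sharing S, A, R ∈ [0, R_max], discount γ, and any value function V with ‖V‖_∞ ≤ R_max/(1−γ), the Bellman optimality operator T_n of the n-th MDP and the Bellman optimality operator T_I of the imaginary MDP (whose transition kernel is the weighted average P̄ = ∑_j q_j P_j with weights q_j ≥ 0 summing to 1) satisfy ‖T_I V − T_n V‖_∞ ≤ γ R_max κ_{n,I} / (1 − γ), where κ_{n,I} = max_{π,s} ∑_{s'} |P_n^π(s'|s) − ∑_j q_j P_j^π(s'|s)|. -/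
/-! Both optimality operators are maxima over actions, and a maximum is 1-Lipschitz in the
sup norm. For a fixed action the two Bellman backups differ by `γ ∑ s', (P̄ - Pₙ) V`, which is
at most `γ ‖V‖` times the ℓ¹ distance between the rows of `P̄` and `Pₙ`; that distance is the
value attained in the supremum defining `κ` by the deterministic policy choosing that action. -/

open Finset Filter

variable {S A : Type*}

/-- A stochastic policy: for each state, a probability distribution over actions. -/
def IsPolicy [Fintype A] (pi : S → A → ℝ) : Prop :=
  (∀ s a, 0 ≤ pi s a) ∧ ∀ s, ∑ a, pi s a = 1

/-- A transition kernel: for each state-action pair, a probability distribution over states. -/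
def IsKernel [Fintype S] (P : S → A → S → ℝ) : Prop :=
  (∀ s a s', 0 ≤ P s a s') ∧ ∀ s a, ∑ s', P s a s' = 1

/-- The policy Bellman operator `T^π` for kernel `P`. -/
def Tpol [Fintype S] [Fintype A] (γ : ℝ) (R : S → A → ℝ) (P : S → A → S → ℝ)
    (pi : S → A → ℝ) (V : S → ℝ) (s : S) : ℝ :=
  ∑ a, pi s a * (R s a + γ * ∑ s', P s a s' * V s')

/-- The Bellman optimality operator `T` for kernel `P`. -/
noncomputable def Topt [Fintype S] [Fintype A] [Nonempty A] (γ : ℝ) (R : S → A → ℝ)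
    (P : S → A → S → ℝ) (V : S → ℝ) (s : S) : ℝ :=
  Finset.univ.sup' Finset.univ_nonempty fun a => R s a + γ * ∑ s', P s a s' * V s'

/-- Heterogeneity measure `κ_{m,n}`: the supremum over policies `π` and states `s` of the
ℓ¹-distance between the induced state transition kernels `P_m^π(·|s)` and `P_n^π(·|s)`. -/
noncomputable def kappa [Fintype S] [Fintype A] (Pm Pn : S → A → S → ℝ) : ℝ :=
  sSup {x : ℝ | ∃ pi : S → A → ℝ, ∃ s : S, IsPolicy pi ∧
    x = ∑ s', |(∑ a, pi s a * Pm s a s') - ∑ a, pi s a * Pn s a s'|}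

/-- Sup-norm of a value function on a finite state space. -/
noncomputable def supNorm [Fintype S] [Nonempty S] (V : S → ℝ) : ℝ := ⨆ s, |V s|

lemma Finset.abs_sup'_sub_sup'_le {α G : Type*} [AddCommGroup G] [LinearOrder G]
    [IsOrderedAddMonoid G] {t : Finset α} (ht : t.Nonempty) {f g : α → G} {c : G}
    (h : ∀ a ∈ t, |f a - g a| ≤ c) : |t.sup' ht f - t.sup' ht g| ≤ c := by
  have key : ∀ f g : α → G, (∀ a ∈ t, f a - g a ≤ c) → t.sup' ht f - t.sup' ht g ≤ c :=
    fun f g h => sub_le_iff_le_add.2 <| sup'_le _ _ fun a ha =>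
      (sub_le_iff_le_add.1 (h a ha)).trans (by gcongr; exact le_sup' g ha)
  exact abs_sub_le_iff.2 ⟨key f g fun a ha => (abs_sub_le_iff.1 (h a ha)).1,
    key g f fun a ha => (abs_sub_le_iff.1 (h a ha)).2⟩

lemma IsPolicy.le_one [Fintype A] {pi : S → A → ℝ} (hpi : IsPolicy pi) (s : S) (a : A) :
    pi s a ≤ 1 :=
  hpi.2 s ▸ single_le_sum (fun b _ => hpi.1 s b) (mem_univ a)

section Finite

variable [Fintype S] [Fintype A]

lemma abs_le_supNorm [Nonempty S] (V : S → ℝ) (s : S) : |V s| ≤ supNorm V :=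
  le_ciSup (f := fun s => |V s|) (Set.finite_range _).bddAbove s

lemma supNorm_nonneg [Nonempty S] (V : S → ℝ) : 0 ≤ supNorm V :=
  (abs_nonneg _).trans (abs_le_supNorm V (Classical.arbitrary S))

lemma supNorm_le [Nonempty S] {V : S → ℝ} {c : ℝ} (h : ∀ s, |V s| ≤ c) : supNorm V ≤ c :=
  ciSup_le h

lemma abs_sum_mul_le_supNorm_mul [Nonempty S] (D V : S → ℝ) :
    |∑ s, D s * V s| ≤ supNorm V * ∑ s, |D s| := by
  rw [mul_sum]
  refine (abs_sum_le_sum_abs _ _).trans (sum_le_sum fun s _ => ?_)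
  rw [abs_mul, mul_comm]
  exact mul_le_mul_of_nonneg_right (abs_le_supNorm V s) (abs_nonneg _)

-- Since `0 ≤ π ≤ 1`, a uniform bound is the total variation `∑ s s' a, |Pm - Pn|`.
lemma bddAbove_kappa_set (Pm Pn : S → A → S → ℝ) :
    BddAbove {x : ℝ | ∃ pi : S → A → ℝ, ∃ s : S, IsPolicy pi ∧
      x = ∑ s', |(∑ a, pi s a * Pm s a s') - ∑ a, pi s a * Pn s a s'|} := by
  refine ⟨∑ s, ∑ s', ∑ a, |Pm s a s' - Pn s a s'|, ?_⟩
  rintro x ⟨pi, s, hpi, rfl⟩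
  have hrow : ∀ s', |(∑ a, pi s a * Pm s a s') - ∑ a, pi s a * Pn s a s'|
      ≤ ∑ a, |Pm s a s' - Pn s a s'| := fun s' => by
    rw [← sum_sub_distrib]
    refine (abs_sum_le_sum_abs _ _).trans (sum_le_sum fun a _ => ?_)
    rw [← mul_sub, abs_mul, abs_of_nonneg (hpi.1 s a)]
    exact mul_le_of_le_one_left (abs_nonneg _) (hpi.le_one s a)
  exact (sum_le_sum fun s' _ => hrow s').trans <|
    single_le_sum (f := fun s => ∑ s', ∑ a, |Pm s a s' - Pn s a s'|)
      (fun _ _ => sum_nonneg fun _ _ => sum_nonneg fun _ _ => abs_nonneg _) (mem_univ s)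

lemma sum_abs_sub_le_kappa [DecidableEq A] (Pm Pn : S → A → S → ℝ) (s : S) (a : A) :
    ∑ s', |Pm s a s' - Pn s a s'| ≤ kappa Pm Pn := by
  refine le_csSup (bddAbove_kappa_set Pm Pn) ⟨fun _ => Pi.single a 1, s, ⟨?_, ?_⟩, ?_⟩
  · intro _ b
    by_cases hb : b = a <;> simp [hb]
  · simp
  · simp [Pi.single_apply, ite_mul]

lemma kappa_nonneg [Nonempty S] [Nonempty A] (Pm Pn : S → A → S → ℝ) : 0 ≤ kappa Pm Pn := by
  classical
  exact (sum_nonneg fun _ _ => abs_nonneg _).trans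
    (sum_abs_sub_le_kappa Pm Pn (Classical.arbitrary S) (Classical.arbitrary A))

lemma abs_Topt_sub_Topt_le [Nonempty S] [Nonempty A] {γ : ℝ} (hγ : 0 ≤ γ) (R : S → A → ℝ)
    (P Q : S → A → S → ℝ) (V : S → ℝ) (s : S) :
    |Topt γ R Q V s - Topt γ R P V s| ≤ γ * supNorm V * kappa P Q := by
  classical
  refine abs_sup'_sub_sup'_le _ fun a _ => ?_
  have hdiff : (R s a + γ * ∑ s', Q s a s' * V s') - (R s a + γ * ∑ s', P s a s' * V s')
      = γ * ∑ s', (Q s a s' - P s a s') * V s' := by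
    simp only [sub_mul, sum_sub_distrib]
    ring
  rw [hdiff, abs_mul, abs_of_nonneg hγ, mul_assoc]
  gcongr
  calc |∑ s', (Q s a s' - P s a s') * V s'|
      ≤ supNorm V * ∑ s', |Q s a s' - P s a s'| := abs_sum_mul_le_supNorm_mul _ _
    _ = supNorm V * ∑ s', |P s a s' - Q s a s'| := by
      congr 1
      exact sum_congr rfl fun _ _ => abs_sub_comm _ _
    _ ≤ supNorm V * kappa P Q :=
      mul_le_mul_of_nonneg_left (sum_abs_sub_le_kappa P Q s a) (supNorm_nonneg V)

end Finite

variable [Fintype S] [Fintype A] [Nonempty S] [Nonempty A]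

theorem stmt2_general (N : ℕ) (γ Rmax : ℝ) (hγ0 : 0 < γ)
    (R : S → A → ℝ)
    (P : Fin N → S → A → S → ℝ)
    (Pbar : S → A → S → ℝ)
    (n : Fin N)
    (V : S → ℝ) (hV : supNorm V ≤ Rmax / (1 - γ)) :
    supNorm (fun s => Topt γ R Pbar V s - Topt γ R (P n) V s) ≤
      γ * Rmax * kappa (P n) Pbar / (1 - γ) := by
  refine supNorm_le fun s => (abs_Topt_sub_Topt_le hγ0.le R (P n) Pbar V s).trans ?_
  calc γ * supNorm V * kappa (P n) Pbar ≤ γ * (Rmax / (1 - γ)) * kappa (P n) Pbar := by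
        gcongr
        exact kappa_nonneg _ _
    _ = γ * Rmax * kappa (P n) Pbar / (1 - γ) := by ring

theorem stmt2 (N : ℕ) (γ Rmax : ℝ) (hγ0 : 0 < γ) (hγ1 : γ < 1)
    (R : S → A → ℝ) (hR : ∀ s a, 0 ≤ R s a ∧ R s a ≤ Rmax)
    (q : Fin N → ℝ) (hq0 : ∀ n, 0 ≤ q n) (hq1 : ∑ n, q n = 1)
    (P : Fin N → S → A → S → ℝ) (hP : ∀ n, IsKernel (P n))
    (Pbar : S → A → S → ℝ) (hPbar : ∀ s a s', Pbar s a s' = ∑ j, q j * P j s a s')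
    (n : Fin N)
    (V : S → ℝ) (hV : supNorm V ≤ Rmax / (1 - γ)) :
    supNorm (fun s => Topt γ R Pbar V s - Topt γ R (P n) V s) ≤
      γ * Rmax * kappa (P n) Pbar / (1 - γ) :=
  stmt2_general N γ Rmax hγ0 R P Pbar n V hV
end

section
/- (Classical API error bound.) In a finite MDP with discount γ ∈ (0,1), if a sequence of policies (π^t) and value estimates (V^t) satisfies ‖V^t − V^{π^t}‖_∞ ≤ δ and ‖T^{π^{t+1}} V^t − T V^t‖_∞ ≤ ε for all t, then limsup_{t→∞} ‖V^{π^t} − V*‖_∞ ≤ (ε + 2γδ)/(1−γ)², where V* is the optimal value function (the fixed point of the Bellman optimality operator T). -/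
/-!
Write `d = ε + 2γδ` and `e_t = ‖V^{π_t} - V*‖`. Since `π_{t+1}` is `ε`-greedy for `V^t`, which is
`δ`-close to `V^{π_t}`, one gets `T V ≤ T^{π_{t+1}} V^{π_t} + γ ‖V - V^{π_t}‖ + d` for every `V`.
With `V = V^{π_t}` this gives `V^{π_t} ≤ T^{π_{t+1}} V^{π_t} + d`, hence the approximate improvement
`V^{π_t} ≤ V^{π_{t+1}} + d/(1-γ)` by the comparison principle for `T^{π_{t+1}}`. With `V = V*` and
`0 ≤ V* - V^{π_{t+1}}` it gives `e_{t+1} ≤ γ e_t + d + γ d/(1-γ) = γ e_t + d/(1-γ)`, and this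
recursion forces `limsup e_t ≤ d/(1-γ)²`.
-/

open Finset Filter

variable {S A : Type*}

variable [Fintype S] [Fintype A] [Nonempty S] [Nonempty A]

lemma sum_mul_le_of_sum_eq_one {ι : Type*} [Fintype ι] {w q : ι → ℝ} {C : ℝ}
    (hw : ∀ i, 0 ≤ w i) (hw1 : ∑ i, w i = 1) (hq : ∀ i, q i ≤ C) :
    ∑ i, w i * q i ≤ C :=
  calc ∑ i, w i * q i ≤ ∑ i, w i * C :=
        sum_le_sum fun i _ => mul_le_mul_of_nonneg_left (hq i) (hw i)
    _ = C := by rw [← sum_mul, hw1, one_mul]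

/-- Unrolling gives `e n ≤ γ ^ n (e 0 - c') + c'` with `c' = c / (1 - γ)`. -/
lemma limsup_le_div_one_sub_of_le_mul_add {e : ℕ → ℝ} {γ c : ℝ} (hγ0 : 0 ≤ γ) (hγ1 : γ < 1)
    (he : ∀ n, 0 ≤ e n) (hrec : ∀ n, e (n + 1) ≤ γ * e n + c) :
    limsup e atTop ≤ c / (1 - γ) := by
  set c' := c / (1 - γ)
  have hc' : γ * c' + c = c' := by
    simp only [c']
    field_simp [show 1 - γ ≠ 0 by linarith]
    ring
  have hunroll : ∀ n, e n ≤ γ ^ n * (e 0 - c') + c' := by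
    intro n
    induction n with
    | zero => simp
    | succ n ih =>
      calc e (n + 1) ≤ γ * e n + c := hrec n
        _ ≤ γ * (γ ^ n * (e 0 - c') + c') + c := by gcongr
        _ = γ ^ (n + 1) * (e 0 - c') + c' := by linear_combination hc'
  have hlim : Tendsto (fun n => γ ^ n * (e 0 - c') + c') atTop (nhds c') := by
    simpa using
      ((tendsto_pow_atTop_nhds_zero_of_lt_one hγ0 hγ1).mul_const (e 0 - c')).add_const c'
  calc limsup e atTop ≤ limsup (fun n => γ ^ n * (e 0 - c') + c') atTop :=
        limsup_le_limsup (Eventually.of_forall hunroll)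
          (isCoboundedUnder_le_of_le atTop (x := 0) he) hlim.isBoundedUnder_le
    _ = c' := hlim.limsup_eq

section Bellman

-- Rebound so that `Nonempty S` and `Nonempty A` are assumed only by the lemmas that need them.
variable {S A : Type*} [Fintype S] [Fintype A]

lemma supNorm_eq_norm [Nonempty S] (V : S → ℝ) : supNorm V = ‖V‖ := by
  have hnonneg : 0 ≤ supNorm V := Real.iSup_nonneg fun s => abs_nonneg (V s)
  refine le_antisymm (ciSup_le fun s => norm_le_pi_norm V s) ?_
  refine (pi_norm_le_iff_of_nonneg hnonneg).2 fun s => ?_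
  exact le_ciSup (Set.finite_range fun s => |V s|).bddAbove s

/-- The state transition operator `P^π` of the policy `π`, so that `T^π V = r^π + γ P^π V`. -/
def Ppol (P : S → A → S → ℝ) (pi : S → A → ℝ) (U : S → ℝ) (s : S) : ℝ :=
  ∑ a, pi s a * ∑ s', P s a s' * U s'

variable {γ : ℝ} {R : S → A → ℝ} {P : S → A → S → ℝ} {pi : S → A → ℝ}

lemma Ppol_le_of_le (hP : IsKernel P) (hpi : IsPolicy pi) {U : S → ℝ} {C : ℝ}
    (hU : ∀ s, U s ≤ C) (s : S) : Ppol P pi U s ≤ C :=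
  sum_mul_le_of_sum_eq_one (hpi.1 s) (hpi.2 s) fun a =>
    sum_mul_le_of_sum_eq_one (hP.1 s a) (hP.2 s a) hU

lemma Tpol_sub_Tpol (V W : S → ℝ) (s : S) :
    Tpol γ R P pi V s - Tpol γ R P pi W s = γ * Ppol P pi (V - W) s := by
  rw [Tpol, Tpol, ← sum_sub_distrib, Ppol, mul_sum]
  refine sum_congr rfl fun a _ => ?_
  simp only [Pi.sub_apply, mul_sub, sum_sub_distrib]
  ring

lemma Tpol_sub_Tpol_le (hγ : 0 ≤ γ) (hP : IsKernel P) (hpi : IsPolicy pi) (V W : S → ℝ)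
    (s : S) : Tpol γ R P pi V s - Tpol γ R P pi W s ≤ γ * ‖V - W‖ := by
  rw [Tpol_sub_Tpol]
  refine mul_le_mul_of_nonneg_left (Ppol_le_of_le hP hpi (fun x => ?_) s) hγ
  exact (le_abs_self _).trans (norm_le_pi_norm (V - W) x)

lemma Tpol_le_Topt [Nonempty A] (hpi : IsPolicy pi) (V : S → ℝ) (s : S) :
    Tpol γ R P pi V s ≤ Topt γ R P V s :=
  sum_mul_le_of_sum_eq_one (hpi.1 s) (hpi.2 s) fun a =>
    le_sup' (fun a => R s a + γ * ∑ s', P s a s' * V s') (mem_univ a)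

lemma Topt_sub_Topt_le [Nonempty A] (hγ : 0 ≤ γ) (hP : IsKernel P) (V W : S → ℝ) (s : S) :
    Topt γ R P V s - Topt γ R P W s ≤ γ * ‖V - W‖ := by
  rw [sub_le_iff_le_add]
  refine sup'_le _ _ fun a _ => ?_
  have hW : R s a + γ * ∑ s', P s a s' * W s' ≤ Topt γ R P W s :=
    le_sup' (fun a => R s a + γ * ∑ s', P s a s' * W s') (mem_univ a)
  have hdiff : ∑ s', P s a s' * (V s' - W s') ≤ ‖V - W‖ :=
    sum_mul_le_of_sum_eq_one (hP.1 s a) (hP.2 s a) fun x =>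
      (le_abs_self _).trans (norm_le_pi_norm (V - W) x)
  have hstep := mul_le_mul_of_nonneg_left hdiff hγ
  simp only [mul_sub, sum_sub_distrib] at hstep
  linarith

/-- Comparison principle: at a maximum point `s₀` of `U`, `U s₀ ≤ γ U s₀ + c`. -/
lemma le_div_one_sub_of_le_mul_Ppol_add [Nonempty S] (hγ0 : 0 ≤ γ) (hγ1 : γ < 1)
    (hP : IsKernel P) (hpi : IsPolicy pi) {U : S → ℝ} {c : ℝ}
    (hU : ∀ s, U s ≤ γ * Ppol P pi U s + c) (s : S) :
    U s ≤ c / (1 - γ) := by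
  obtain ⟨s₀, -, hmax⟩ := exists_max_image univ U univ_nonempty
  have hPs₀ : Ppol P pi U s₀ ≤ U s₀ := Ppol_le_of_le hP hpi (fun x => hmax x (mem_univ x)) s₀
  have hs₀ : U s₀ ≤ c / (1 - γ) := by
    rw [le_div_iff₀ (by linarith)]
    linarith [hU s₀, mul_le_mul_of_nonneg_left hPs₀ hγ0]
  exact (hmax s (mem_univ s)).trans hs₀

lemma le_fixedPoint_add [Nonempty S] (hγ0 : 0 ≤ γ) (hγ1 : γ < 1) (hP : IsKernel P)
    (hpi : IsPolicy pi) {V W : S → ℝ} {c : ℝ} (hV : ∀ s, V s = Tpol γ R P pi V s)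
    (hW : ∀ s, W s ≤ Tpol γ R P pi W s + c) (s : S) : W s ≤ V s + c / (1 - γ) := by
  have := le_div_one_sub_of_le_mul_Ppol_add hγ0 hγ1 hP hpi (U := W - V) (c := c) (fun x => by
    rw [Pi.sub_apply, ← Tpol_sub_Tpol, ← hV x]; linarith [hW x]) s
  rw [Pi.sub_apply] at this
  linarith

lemma fixedPoint_le [Nonempty S] (hγ0 : 0 ≤ γ) (hγ1 : γ < 1) (hP : IsKernel P)
    (hpi : IsPolicy pi) {V W : S → ℝ} (hV : ∀ s, V s = Tpol γ R P pi V s)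
    (hW : ∀ s, Tpol γ R P pi W s ≤ W s) (s : S) : V s ≤ W s := by
  have := le_div_one_sub_of_le_mul_Ppol_add hγ0 hγ1 hP hpi (U := V - W) (c := 0) (fun x => by
    rw [Pi.sub_apply, ← Tpol_sub_Tpol, ← hV x]; linarith [hW x]) s
  rw [Pi.sub_apply, zero_div] at this
  linarith

lemma fixedPoint_le_fixedPoint_Topt [Nonempty S] [Nonempty A] (hγ0 : 0 ≤ γ) (hγ1 : γ < 1)
    (hP : IsKernel P) (hpi : IsPolicy pi) {V Vstar : S → ℝ} (hV : ∀ s, V s = Tpol γ R P pi V s)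
    (hVstar : ∀ s, Vstar s = Topt γ R P Vstar s) (s : S) : V s ≤ Vstar s :=
  fixedPoint_le hγ0 hγ1 hP hpi hV (fun x => (Tpol_le_Topt hpi Vstar x).trans_eq (hVstar x).symm) s

lemma Topt_sub_Tpol_le [Nonempty A] (hγ : 0 ≤ γ) (hP : IsKernel P) (hpi : IsPolicy pi)
    {V W : S → ℝ} {δ ε : ℝ} (hW : ‖W - V‖ ≤ δ) (hgreedy : ‖Tpol γ R P pi W - Topt γ R P W‖ ≤ ε)
    (U : S → ℝ) (s : S) :
    Topt γ R P U s - Tpol γ R P pi V s ≤ γ * ‖U - V‖ + (ε + 2 * γ * δ) := by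
  have hUW : Topt γ R P U s - Topt γ R P W s ≤ γ * (‖U - V‖ + δ) :=
    (Topt_sub_Topt_le hγ hP U W s).trans <| mul_le_mul_of_nonneg_left
      ((norm_sub_le_norm_sub_add_norm_sub U V W).trans (by rw [norm_sub_rev V W]; linarith)) hγ
  have hWpi : Topt γ R P W s - Tpol γ R P pi W s ≤ ε := by
    have := norm_le_pi_norm (Tpol γ R P pi W - Topt γ R P W) s
    rw [Real.norm_eq_abs, Pi.sub_apply, abs_sub_comm] at this
    exact (le_abs_self _).trans (this.trans hgreedy)
  have hWV : Tpol γ R P pi W s - Tpol γ R P pi V s ≤ γ * δ :=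
    (Tpol_sub_Tpol_le hγ hP hpi W V s).trans (mul_le_mul_of_nonneg_left hW hγ)
  linarith

lemma norm_fixedPoint_sub_optimal_le [Nonempty S] [Nonempty A] (hγ0 : 0 ≤ γ) (hγ1 : γ < 1)
    (hP : IsKernel P) {pi' : S → A → ℝ} (hpi : IsPolicy pi) (hpi' : IsPolicy pi')
    {V V' W Vstar : S → ℝ} {δ ε : ℝ}
    (hV : ∀ s, V s = Tpol γ R P pi V s) (hV' : ∀ s, V' s = Tpol γ R P pi' V' s)
    (hVstar : ∀ s, Vstar s = Topt γ R P Vstar s)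
    (hW : ‖W - V‖ ≤ δ) (hgreedy : ‖Tpol γ R P pi' W - Topt γ R P W‖ ≤ ε) :
    ‖V' - Vstar‖ ≤ γ * ‖V - Vstar‖ + (ε + 2 * γ * δ) / (1 - γ) := by
  set d := ε + 2 * γ * δ
  have himprove : ∀ s, V s - V' s ≤ d / (1 - γ) := fun s => by
    have := le_fixedPoint_add hγ0 hγ1 hP hpi' hV' (W := V) (c := d) (fun x => by
      have := Topt_sub_Tpol_le hγ0 hP hpi' hW hgreedy V x
      rw [sub_self, norm_zero, mul_zero] at this
      linarith [hV x, Tpol_le_Topt (γ := γ) (R := R) (P := P) hpi V x]) s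
    linarith
  have hd : d + γ * (d / (1 - γ)) = d / (1 - γ) := by
    field_simp [show 1 - γ ≠ 0 by linarith]
    ring
  have hbound : 0 ≤ γ * ‖V - Vstar‖ + d / (1 - γ) := by
    have hδ : 0 ≤ δ := (norm_nonneg _).trans hW
    have hε : 0 ≤ ε := (norm_nonneg _).trans hgreedy
    have : 0 ≤ d / (1 - γ) := div_nonneg (by positivity) (by linarith)
    positivity
  refine (pi_norm_le_iff_of_nonneg hbound).2 fun s => ?_
  have hopt := fixedPoint_le_fixedPoint_Topt hγ0 hγ1 hP hpi' hV' hVstar s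
  have hfirst := Topt_sub_Tpol_le hγ0 hP hpi' hW hgreedy Vstar s
  have hsecond : Tpol γ R P pi' V s - Tpol γ R P pi' V' s ≤ γ * (d / (1 - γ)) := by
    rw [Tpol_sub_Tpol]
    exact mul_le_mul_of_nonneg_left (Ppol_le_of_le hP hpi' himprove s) hγ0
  rw [Real.norm_eq_abs, Pi.sub_apply, abs_sub_comm, abs_of_nonneg (by linarith),
    norm_sub_rev V Vstar]
  linarith [hVstar s, hV' s]

end Bellman

theorem stmt14_general (γ δ ε : ℝ) (hγ0 : 0 < γ) (hγ1 : γ < 1)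
    (R : S → A → ℝ)
    (P : S → A → S → ℝ) (hP : IsKernel P)
    (pit : ℕ → S → A → ℝ) (hpit : ∀ t, IsPolicy (pit t))
    (Vpi : ℕ → S → ℝ) (hVpi : ∀ t s, Vpi t s = Tpol γ R P (pit t) (Vpi t) s)
    (Vt : ℕ → S → ℝ)
    (hδ : ∀ t, supNorm (fun s => Vt t s - Vpi t s) ≤ δ)
    (hε : ∀ t, supNorm (fun s => Tpol γ R P (pit (t + 1)) (Vt t) s - Topt γ R P (Vt t) s) ≤ ε)
    (Vstar : S → ℝ) (hVstar : ∀ s, Vstar s = Topt γ R P Vstar s) :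
    limsup (fun t => supNorm (fun s => Vpi t s - Vstar s)) atTop ≤
      (ε + 2 * γ * δ) / (1 - γ) ^ 2 := by
  have hstep : ∀ t, ‖Vpi (t + 1) - Vstar‖ ≤ γ * ‖Vpi t - Vstar‖ + (ε + 2 * γ * δ) / (1 - γ) :=
    fun t => norm_fixedPoint_sub_optimal_le hγ0.le hγ1 hP (hpit t) (hpit (t + 1)) (hVpi t)
      (hVpi (t + 1)) hVstar ((supNorm_eq_norm _).symm.trans_le (hδ t))
      ((supNorm_eq_norm _).symm.trans_le (hε t))
  have hlimsup := limsup_le_div_one_sub_of_le_mul_add (e := fun t => ‖Vpi t - Vstar‖) hγ0.le hγ1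
    (fun t => norm_nonneg _) hstep
  have hnorm : (fun t => supNorm fun s => Vpi t s - Vstar s) = fun t => ‖Vpi t - Vstar‖ :=
    funext fun t => supNorm_eq_norm _
  rwa [hnorm, sq, ← div_div]

theorem stmt14 (γ Rmax δ ε : ℝ) (hγ0 : 0 < γ) (hγ1 : γ < 1)
    (R : S → A → ℝ) (hR : ∀ s a, 0 ≤ R s a ∧ R s a ≤ Rmax)
    (P : S → A → S → ℝ) (hP : IsKernel P)
    (pit : ℕ → S → A → ℝ) (hpit : ∀ t, IsPolicy (pit t))
    (Vpi : ℕ → S → ℝ) (hVpi : ∀ t s, Vpi t s = Tpol γ R P (pit t) (Vpi t) s)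
    (Vt : ℕ → S → ℝ)
    (hδ : ∀ t, supNorm (fun s => Vt t s - Vpi t s) ≤ δ)
    (hε : ∀ t, supNorm (fun s => Tpol γ R P (pit (t + 1)) (Vt t) s - Topt γ R P (Vt t) s) ≤ ε)
    (Vstar : S → ℝ) (hVstar : ∀ s, Vstar s = Topt γ R P Vstar s) :
    limsup (fun t => supNorm (fun s => Vpi t s - Vstar s)) atTop ≤
      (ε + 2 * γ * δ) / (1 - γ) ^ 2 :=
  stmt14_general γ δ ε hγ0 hγ1 R P hP pit hpit Vpi hVpi Vt hδ hε Vstar hVstar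
end
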